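/- arXiv:2204.05449 — 2 statements merged into one kernel-verified Lean document; each statement's English description precedes it below -/
import Mathlib

section
/- The KL divergence from Weibull(k, λ) to Gamma(α, β) (rate parameterization) equals (γα)/k − α log λ + log k + βλ Γ(1 + 1/k) − γ − 1 − α log β + log Γ(α), where γ is the Euler–Mascheroni constant. -/
/-!
Under `x = λ t ^ (1/k)` the Weibull law becomes the standard exponential law, and the
log-density ratio becomes `C + (1 - α/k) log t - t + βλ t ^ (1/k)` with `C` collecting the
normalising constants. Integrating against `e^{-t}` uses `∫ log t e^{-t} = Γ'(1) = -γ`,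
`∫ t e^{-t} = 1` and `∫ t ^ (1/k) e^{-t} = Γ(1 + 1/k)`.
-/

open Real MeasureTheory

/-- Density of the Weibull distribution with shape `k` and scale `lam`. -/
noncomputable def weibullPdf (k lam x : ℝ) : ℝ :=
  (k / lam) * (x / lam) ^ (k - 1) * Real.exp (-(x / lam) ^ k)

/-- Density of the gamma distribution with shape `α` and rate `β`. -/
noncomputable def gammaPdf (α β x : ℝ) : ℝ :=
  β ^ α * x ^ (α - 1) * Real.exp (-(β * x)) / Real.Gamma α

open Set Filter Topology

theorem integral_exp_neg_mul_rpow_eq_Gamma {c : ℝ} (hc : -1 < c) :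
    ∫ t in Ioi 0, exp (-t) * t ^ c = Gamma (c + 1) := by
  rw [Gamma_eq_integral (by linarith), add_sub_cancel_right]

theorem integrableOn_exp_neg_mul_rpow {c : ℝ} (hc : -1 < c) :
    IntegrableOn (fun t ↦ exp (-t) * t ^ c) (Ioi 0) := by
  simpa using Real.GammaIntegral_convergent (s := c + 1) (by linarith)

theorem integrableOn_log_mul_exp_neg :
    IntegrableOn (fun t ↦ log t * exp (-t)) (Ioi 0) := by
  rw [← Ioc_union_Ioi_eq_Ioi zero_le_one, integrableOn_union]
  constructor
  · exact ((intervalIntegrable_iff_integrableOn_Ioc_of_le zero_le_one).1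
        intervalIntegral.intervalIntegrable_log').mul_continuousOn_of_subset (K := Icc 0 1)
        (by fun_prop) measurableSet_Ioc isCompact_Icc Ioc_subset_Icc_self
  · -- dominated by `t e^{-t}`, as `0 ≤ log t ≤ t` for `t ≥ 1`
    have hdom : IntegrableOn (fun t ↦ exp (-t) * t ^ (1 : ℝ)) (Ioi 1) :=
      (integrableOn_exp_neg_mul_rpow (by norm_num)).mono_set (Ioi_subset_Ioi zero_le_one)
    refine hdom.mono' (by fun_prop) (ae_restrict_of_forall_mem measurableSet_Ioi fun t ht ↦ ?_)
    have ht : 1 < t := ht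
    rw [norm_mul, norm_of_nonneg (log_nonneg ht.le), norm_of_nonneg (exp_pos _).le,
      rpow_one, mul_comm]
    gcongr
    linarith [log_le_sub_one_of_pos (zero_lt_one.trans ht)]

theorem integral_log_mul_exp_neg :
    ∫ t in Ioi 0, log t * exp (-t) = -eulerMascheroniConstant := by
  have hGammaIntegral := Complex.hasDerivAt_GammaIntegral (s := 1) (by simp)
  have hGamma : Complex.Gamma =ᶠ[𝓝 1] Complex.GammaIntegral := by
    filter_upwards [(isOpen_lt continuous_const Complex.continuous_re).mem_nhds
      (by simp : (0 : ℝ) < (1 : ℂ).re)] with s hs using Complex.Gamma_eq_integral hs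
  have hderiv :=
    (hGammaIntegral.congr_of_eventuallyEq hGamma).unique Complex.hasDerivAt_Gamma_one
  simp only [sub_self, Complex.cpow_zero, one_mul, ← Complex.ofReal_mul] at hderiv
  rw [integral_complex_ofReal] at hderiv
  exact_mod_cast hderiv

theorem integral_exp_neg_mul_add_log_sub_add_rpow (C a b : ℝ) {c : ℝ} (hc : -1 < c) :
    ∫ t in Ioi 0, exp (-t) * (C + a * log t - t + b * t ^ c)
      = C - a * eulerMascheroniConstant - 1 + b * Gamma (c + 1) := by
  have hexp : IntegrableOn (fun t ↦ exp (-t)) (Ioi 0) := by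
    simpa using exp_neg_integrableOn_Ioi 0 one_pos
  have hid : IntegrableOn (fun t ↦ exp (-t) * t) (Ioi 0) := by
    simpa using integrableOn_exp_neg_mul_rpow (c := 1) (by norm_num)
  have hid_eq : ∫ t in Ioi 0, exp (-t) * t = 1 := by
    simpa [one_add_one_eq_two] using integral_exp_neg_mul_rpow_eq_Gamma (c := 1) (by norm_num)
  have hsplit : ∀ t, exp (-t) * (C + a * log t - t + b * t ^ c)
      = C * exp (-t) + a * (log t * exp (-t)) - exp (-t) * t + b * (exp (-t) * t ^ c) := by
    intro t; ring
  have hC := hexp.const_mul C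
  have hlog := integrableOn_log_mul_exp_neg.const_mul a
  have hrpow := (integrableOn_exp_neg_mul_rpow hc).const_mul b
  simp_rw [hsplit]
  rw [integral_add (by exact (hC.add hlog).sub hid) hrpow,
    integral_sub (by exact hC.add hlog) hid, integral_add hC hlog, integral_const_mul,
    integral_const_mul, integral_const_mul,
    integral_exp_neg_Ioi_zero, integral_log_mul_exp_neg, hid_eq,
    integral_exp_neg_mul_rpow_eq_Gamma hc]
  ring

theorem weibullPdf_mul_rpow_inv {k lam t : ℝ} (hk : 0 < k) (hlam : 0 < lam) (ht : 0 < t) :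
    weibullPdf k lam (lam * t ^ k⁻¹) = k / lam * t ^ (1 - k⁻¹) * exp (-t) := by
  have hpow (p : ℝ) : (t ^ k⁻¹) ^ p = t ^ (k⁻¹ * p) := (rpow_mul ht.le _ _).symm
  rw [weibullPdf, mul_div_cancel_left₀ _ hlam.ne', hpow, hpow, inv_mul_cancel₀ hk.ne', rpow_one,
    mul_sub, inv_mul_cancel₀ hk.ne', mul_one]

theorem integral_weibullPdf_mul {k lam : ℝ} (hk : 0 < k) (hlam : 0 < lam) (g : ℝ → ℝ) :
    ∫ x in Ioi 0, weibullPdf k lam x * g x = ∫ t in Ioi 0, exp (-t) * g (lam * t ^ k⁻¹) := by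
  set h : ℝ → ℝ := fun x ↦ weibullPdf k lam x * g x
  have hscale := integral_comp_mul_left_Ioi h 0 hlam
  have hpow := integral_comp_rpow_Ioi_of_pos (g := fun y ↦ h (lam * y)) (inv_pos.2 hk)
  rw [mul_zero, smul_eq_mul] at hscale
  calc ∫ x in Ioi 0, h x = lam * ∫ y in Ioi 0, h (lam * y) := by
        rw [hscale, mul_inv_cancel_left₀ hlam.ne']
    _ = ∫ t in Ioi 0, lam * ((k⁻¹ * t ^ (k⁻¹ - 1)) * h (lam * t ^ k⁻¹)) := by
        rw [← hpow, ← integral_const_mul]; rfl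
    _ = ∫ t in Ioi 0, exp (-t) * g (lam * t ^ k⁻¹) := by
        refine setIntegral_congr_fun measurableSet_Ioi fun t (ht : 0 < t) ↦ ?_
        have hjac : t ^ (k⁻¹ - 1) * t ^ (1 - k⁻¹) = 1 := by
          rw [← rpow_add ht, sub_add_sub_cancel, sub_self, rpow_zero]
        calc lam * ((k⁻¹ * t ^ (k⁻¹ - 1)) * h (lam * t ^ k⁻¹))
            = (lam / lam) * (k / k) * (t ^ (k⁻¹ - 1) * t ^ (1 - k⁻¹))
              * (exp (-t) * g (lam * t ^ k⁻¹)) := by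
              simp only [h, weibullPdf_mul_rpow_inv hk hlam ht]; ring
          _ = exp (-t) * g (lam * t ^ k⁻¹) := by
              rw [div_self hlam.ne', div_self hk.ne', hjac, one_mul, one_mul, one_mul]

theorem gammaPdf_pos {α β x : ℝ} (hα : 0 < α) (hβ : 0 < β) (hx : 0 < x) :
    0 < gammaPdf α β x := by
  have := Gamma_pos_of_pos hα
  unfold gammaPdf
  positivity

theorem log_gammaPdf {α β x : ℝ} (hα : 0 < α) (hβ : 0 < β) (hx : 0 < x) :
    log (gammaPdf α β x) = α * log β + (α - 1) * log x - β * x - log (Gamma α) := by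
  have := Gamma_pos_of_pos hα
  rw [gammaPdf, log_div (by positivity) this.ne', log_mul (by positivity) (exp_pos _).ne',
    log_mul (by positivity) (by positivity), log_rpow hβ, log_rpow hx, log_exp]
  ring

theorem log_weibullPdf_div_gammaPdf_mul_rpow_inv {k lam α β t : ℝ} (hk : 0 < k)
    (hlam : 0 < lam) (hα : 0 < α) (hβ : 0 < β) (ht : 0 < t) :
    log (weibullPdf k lam (lam * t ^ k⁻¹) / gammaPdf α β (lam * t ^ k⁻¹))
      = (log k - α * log lam - α * log β + log (Gamma α)) + (1 - α / k) * log t - t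
        + β * lam * t ^ k⁻¹ := by
  have hx : 0 < lam * t ^ k⁻¹ := by positivity
  have hp : 0 < weibullPdf k lam (lam * t ^ k⁻¹) := by
    rw [weibullPdf_mul_rpow_inv hk hlam ht]; positivity
  rw [log_div hp.ne' (gammaPdf_pos hα hβ hx).ne', log_gammaPdf hα hβ hx,
    weibullPdf_mul_rpow_inv hk hlam ht, log_mul (by positivity) (exp_pos _).ne',
    log_mul (by positivity) (by positivity), log_div hk.ne' hlam.ne', log_rpow ht, log_exp,
    log_mul hlam.ne' (by positivity), log_rpow ht]
  field_simp
  ring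

/-- Closed form of the KL divergence from `Weibull(k, λ)` to `Gamma(α, β)`. -/
theorem kl_weibull_gamma {k lam α β : ℝ}
    (hk : 0 < k) (hlam : 0 < lam) (hα : 0 < α) (hβ : 0 < β) :
    ∫ x in Set.Ioi (0 : ℝ),
        weibullPdf k lam x * Real.log (weibullPdf k lam x / gammaPdf α β x)
      = Real.eulerMascheroniConstant * α / k - α * Real.log lam + Real.log k
        + β * lam * Real.Gamma (1 + 1 / k)
        - Real.eulerMascheroniConstant - 1 - α * Real.log β + Real.log (Real.Gamma α) := by
  rw [integral_weibullPdf_mul hk hlam,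
    setIntegral_congr_fun measurableSet_Ioi fun t (ht : 0 < t) ↦ congrArg (exp (-t) * ·)
      (log_weibullPdf_div_gammaPdf_mul_rpow_inv hk hlam hα hβ ht),
    integral_exp_neg_mul_add_log_sub_add_rpow _ _ _ (by linarith [inv_pos.2 hk]),
    one_div, add_comm 1 k⁻¹]
  ring
end

section
/- Under the generative model of Theorem 1 (latent Z = (z, {wᵢ}) with z depending only on context D and wᵢ depending on (xᵢ, D), and y generated from (x, Z)), the per-task objective L_{T_k}(φ, θ) = Σᵢ[ log p_θ(yᵢ|xᵢ, z, rᵢ) − KL(q_φ(wᵢ|xᵢ, X_c) ‖ q_φ(wᵢ|X_c)) ] − KL(q_φ(z|X,Y) ‖ q_φ(z|X_c,Y_c)) satisfies L_{T_k}(φ, θ) ≤ I(yᵢ; D | xᵢ) − I(Z; xᵢ | D), up to an additive constant determined by the data generating process. -/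
/-! With the networks equal to the true conditionals, `objectiveL = -H(y|x,Z) - KL_w - KL_z`.
Since `z ⊥ x | D` the `z`-term vanishes, and since moreover `z ⊥ w` given `(x, D)` and given `D`,
the `w`-term is exactly `I(Z; x | D)`. Finally `I(y; D | x) = H(y|x) - H(y|x,D)`, and
`H(y|x,D) ≤ H(y|x,Z)`: as `y ⊥ Z | (x, D)`, the gap is the divergence of the joint law from
`p(x, D, Z) p(y | x, Z)`, which is nonnegative by Gibbs' inequality. -/

open Real Finset

noncomputable section

namespace NPSA

variable {Yt Xt Dt Zt Wt : Type*}
  [Fintype Yt] [Fintype Xt] [Fintype Dt] [Fintype Zt] [Fintype Wt]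

/-! Marginals of a joint pmf `P y x d z w` over the target output `y`, target input `x`,
context dataset `D`, global latent `z` and local latent `w`. -/

variable (P : Yt → Xt → Dt → Zt → Wt → ℝ)

def pYXZW (y : Yt) (x : Xt) (z : Zt) (w : Wt) : ℝ := ∑ d, P y x d z w
def pXZW (x : Xt) (z : Zt) (w : Wt) : ℝ := ∑ y, ∑ d, P y x d z w
def pXDZW (x : Xt) (d : Dt) (z : Zt) (w : Wt) : ℝ := ∑ y, P y x d z w
def pXD (x : Xt) (d : Dt) : ℝ := ∑ y, ∑ z, ∑ w, P y x d z w
def pXDW (x : Xt) (d : Dt) (w : Wt) : ℝ := ∑ y, ∑ z, P y x d z w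
def pXDZ (x : Xt) (d : Dt) (z : Zt) : ℝ := ∑ y, ∑ w, P y x d z w
def pD (d : Dt) : ℝ := ∑ y, ∑ x, ∑ z, ∑ w, P y x d z w
def pDW (d : Dt) (w : Wt) : ℝ := ∑ y, ∑ x, ∑ z, P y x d z w
def pDZ (d : Dt) (z : Zt) : ℝ := ∑ y, ∑ x, ∑ w, P y x d z w
def pDZW (d : Dt) (z : Zt) (w : Wt) : ℝ := ∑ y, ∑ x, P y x d z w
def pYX (y : Yt) (x : Xt) : ℝ := ∑ d, ∑ z, ∑ w, P y x d z w
def pX (x : Xt) : ℝ := ∑ y, ∑ d, ∑ z, ∑ w, P y x d z w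
def pYXD (y : Yt) (x : Xt) (d : Dt) : ℝ := ∑ z, ∑ w, P y x d z w

/-- The per-task objective `L = E[log p(y|x,z,w)] − E[KL(q(w|x,D) ‖ q(w|D))]
− E[KL(q(z|·) ‖ q(z|D))]`, instantiated with the true conditionals of the joint model
(the networks being "perfectly able to leverage all information"). -/
def objectiveL : ℝ :=
  (∑ y, ∑ x, ∑ z, ∑ w, pYXZW P y x z w *
      Real.log (pYXZW P y x z w / pXZW P x z w))
  - (∑ x, ∑ d, ∑ w, pXDW P x d w *
      Real.log ((pXDW P x d w / pXD P x d) / (pDW P d w / pD P d)))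
  - (∑ x, ∑ d, ∑ z, pXDZ P x d z *
      Real.log ((pXDZ P x d z / pXD P x d) / (pDZ P d z / pD P d)))

/-- Conditional entropy `H(y|x)`, the additive constant determined by the
(uncontrollable) data generating process. -/
def condEntropyYX : ℝ :=
  -∑ y, ∑ x, pYX P y x * Real.log (pYX P y x / pX P x)

/-- `I(y; D | x)`. -/
def IyDx : ℝ :=
  ∑ y, ∑ x, ∑ d, pYXD P y x d *
    Real.log (pYXD P y x d * pX P x / (pYX P y x * pXD P x d))

/-- `I(Z; x | D)` for the joint latent `Z = (z, w)`. -/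
def IZxD : ℝ :=
  ∑ x, ∑ d, ∑ z, ∑ w, pXDZW P x d z w *
    Real.log (pXDZW P x d z w * pD P d / (pXD P x d * pDZW P d z w))

set_option linter.unusedSectionVars false

lemma sub_le_mul_log_div {a b : ℝ} (ha : 0 ≤ a) (hb : 0 ≤ b) (hab : 0 < a → 0 < b) :
    a - b ≤ a * log (a / b) := by
  rcases ha.eq_or_lt with rfl | ha
  · simpa using hb
  have hb := hab ha
  calc a - b = a * (1 - (a / b)⁻¹) := by field_simp
    _ ≤ a * log (a / b) := by gcongr; exact one_sub_inv_le_log_of_pos (by positivity)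

section SumLe

variable {α β γ δ : Type*} [Fintype α] [Fintype β] [Fintype γ] [Fintype δ]

lemma single_le_sum₂ {f : α → β → ℝ} (hf : ∀ a b, 0 ≤ f a b) (a : α) (b : β) :
    f a b ≤ ∑ a, ∑ b, f a b :=
  (single_le_sum (fun b _ => hf a b) (mem_univ b)).trans
    (single_le_sum (fun a _ => sum_nonneg fun b _ => hf a b) (mem_univ a))

lemma single_le_sum₃ {f : α → β → γ → ℝ} (hf : ∀ a b c, 0 ≤ f a b c) (a : α) (b : β) (c : γ) :
    f a b c ≤ ∑ a, ∑ b, ∑ c, f a b c :=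
  (single_le_sum₂ (hf a) b c).trans
    (single_le_sum (fun a _ => sum_nonneg fun b _ => sum_nonneg fun c _ => hf a b c) (mem_univ a))

lemma single_le_sum₄ {f : α → β → γ → δ → ℝ} (hf : ∀ a b c d, 0 ≤ f a b c d)
    (a : α) (b : β) (c : γ) (d : δ) : f a b c d ≤ ∑ a, ∑ b, ∑ c, ∑ d, f a b c d :=
  (single_le_sum₃ (hf a) b c d).trans (single_le_sum (fun a _ => sum_nonneg fun b _ =>
    sum_nonneg fun c _ => sum_nonneg fun d _ => hf a b c d) (mem_univ a))

end SumLe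

def jointExpect (F : Yt → Xt → Dt → Zt → Wt → ℝ) : ℝ :=
  ∑ y, ∑ x, ∑ d, ∑ z, ∑ w, P y x d z w * F y x d z w

def condEntropyYXZW : ℝ :=
  -∑ y, ∑ x, ∑ z, ∑ w, pYXZW P y x z w * log (pYXZW P y x z w / pXZW P x z w)

def condEntropyYXD : ℝ :=
  -∑ y, ∑ x, ∑ d, pYXD P y x d * log (pYXD P y x d / pXD P x d)

def klLocal : ℝ :=
  ∑ x, ∑ d, ∑ w, pXDW P x d w * log ((pXDW P x d w / pXD P x d) / (pDW P d w / pD P d))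

def klGlobal : ℝ :=
  ∑ x, ∑ d, ∑ z, pXDZ P x d z * log ((pXDZ P x d z / pXD P x d) / (pDZ P d z / pD P d))

/-- `p(x, D, z, w) p(y | x, z, w)`, the law under which `y` depends on `D` only through
`(x, z, w)`; the divergence of `P` from it is `I(y; D | x, Z)`. -/
def markovJoint (y : Yt) (x : Xt) (d : Dt) (z : Zt) (w : Wt) : ℝ :=
  pXDZW P x d z w * pYXZW P y x z w / pXZW P x z w

lemma objectiveL_eq : objectiveL P = -condEntropyYXZW P - klLocal P - klGlobal P := by
  rw [condEntropyYXZW, neg_neg]; rfl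

section

variable {P}

lemma sum_pYXZW_mul (f : Yt → Xt → Zt → Wt → ℝ) :
    ∑ y, ∑ x, ∑ z, ∑ w, pYXZW P y x z w * f y x z w =
      jointExpect P fun y x _ z w => f y x z w := by
  simp only [jointExpect, pYXZW, sum_mul]
  simp_rw [sum_comm (s := (univ : Finset Dt))]

lemma sum_pYXD_mul (f : Yt → Xt → Dt → ℝ) :
    ∑ y, ∑ x, ∑ d, pYXD P y x d * f y x d = jointExpect P fun y x d _ _ => f y x d := by
  simp only [jointExpect, pYXD, sum_mul]

lemma sum_pYX_mul (f : Yt → Xt → ℝ) :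
    ∑ y, ∑ x, pYX P y x * f y x = jointExpect P fun y x _ _ _ => f y x := by
  simp only [jointExpect, pYX, sum_mul]

lemma sum_pXDW_mul (f : Xt → Dt → Wt → ℝ) :
    ∑ x, ∑ d, ∑ w, pXDW P x d w * f x d w = jointExpect P fun _ x d _ w => f x d w := by
  simp only [jointExpect, pXDW, sum_mul]
  simp_rw [sum_comm (t := (univ : Finset Yt)), sum_comm (s := (univ : Finset Wt))]

lemma sum_pXDZ_mul (f : Xt → Dt → Zt → ℝ) :
    ∑ x, ∑ d, ∑ z, pXDZ P x d z * f x d z = jointExpect P fun _ x d z _ => f x d z := by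
  simp only [jointExpect, pXDZ, sum_mul]
  simp_rw [sum_comm (t := (univ : Finset Yt))]

lemma sum_pXDZW_mul (f : Xt → Dt → Zt → Wt → ℝ) :
    ∑ x, ∑ d, ∑ z, ∑ w, pXDZW P x d z w * f x d z w =
      jointExpect P fun _ x d z w => f x d z w := by
  simp only [jointExpect, pXDZW, sum_mul]
  simp_rw [sum_comm (t := (univ : Finset Yt))]

section Support

variable {y : Yt} {x : Xt} {d : Dt} {z : Zt} {w : Wt}

lemma pXDZW_pos (hP : ∀ y x d z w, 0 ≤ P y x d z w) (h : 0 < P y x d z w) :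
    0 < pXDZW P x d z w :=
  h.trans_le (single_le_sum (fun y _ => hP y x d z w) (mem_univ y))

lemma pYXZW_pos (hP : ∀ y x d z w, 0 ≤ P y x d z w) (h : 0 < P y x d z w) :
    0 < pYXZW P y x z w :=
  h.trans_le (single_le_sum (fun d _ => hP y x d z w) (mem_univ d))

lemma pXZW_pos (hP : ∀ y x d z w, 0 ≤ P y x d z w) (h : 0 < P y x d z w) :
    0 < pXZW P x z w := h.trans_le (single_le_sum₂ (fun y d => hP y x d z w) y d)

lemma pYXD_pos (hP : ∀ y x d z w, 0 ≤ P y x d z w) (h : 0 < P y x d z w) :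
    0 < pYXD P y x d := h.trans_le (single_le_sum₂ (fun z w => hP y x d z w) z w)

lemma pDZW_pos (hP : ∀ y x d z w, 0 ≤ P y x d z w) (h : 0 < P y x d z w) :
    0 < pDZW P d z w := h.trans_le (single_le_sum₂ (fun y x => hP y x d z w) y x)

lemma pXD_pos (hP : ∀ y x d z w, 0 ≤ P y x d z w) (h : 0 < P y x d z w) :
    0 < pXD P x d := h.trans_le (single_le_sum₃ (fun y z w => hP y x d z w) y z w)

lemma pDW_pos (hP : ∀ y x d z w, 0 ≤ P y x d z w) (h : 0 < P y x d z w) :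
    0 < pDW P d w := h.trans_le (single_le_sum₃ (fun y x z => hP y x d z w) y x z)

lemma pDZ_pos (hP : ∀ y x d z w, 0 ≤ P y x d z w) (h : 0 < P y x d z w) :
    0 < pDZ P d z := h.trans_le (single_le_sum₃ (fun y x w => hP y x d z w) y x w)

lemma pYX_pos (hP : ∀ y x d z w, 0 ≤ P y x d z w) (h : 0 < P y x d z w) :
    0 < pYX P y x := h.trans_le (single_le_sum₃ (fun d z w => hP y x d z w) d z w)

lemma pX_pos (hP : ∀ y x d z w, 0 ≤ P y x d z w) (h : 0 < P y x d z w) :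
    0 < pX P x := h.trans_le (single_le_sum₄ (fun y d z w => hP y x d z w) y d z w)

end Support

lemma jointExpect_sub (F G : Yt → Xt → Dt → Zt → Wt → ℝ) :
    jointExpect P (fun y x d z w => F y x d z w - G y x d z w) =
      jointExpect P F - jointExpect P G := by
  simp only [jointExpect, mul_sub, sum_sub_distrib]

lemma jointExpect_congr (hP : ∀ y x d z w, 0 ≤ P y x d z w) {F G : Yt → Xt → Dt → Zt → Wt → ℝ}
    (h : ∀ y x d z w, 0 < P y x d z w → F y x d z w = G y x d z w) :
    jointExpect P F = jointExpect P G := by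
  unfold jointExpect
  congr! 5 with y _ x _ d _ z _ w _
  rcases (hP y x d z w).eq_or_lt with h0 | hpos
  · rw [← h0, zero_mul, zero_mul]
  · rw [h y x d z w hpos]

lemma sum_sub_sum_le_jointExpect_log_div (hP : ∀ y x d z w, 0 ≤ P y x d z w)
    {Q : Yt → Xt → Dt → Zt → Wt → ℝ} (hQ : ∀ y x d z w, 0 ≤ Q y x d z w)
    (hPQ : ∀ y x d z w, 0 < P y x d z w → 0 < Q y x d z w) :
    (∑ y, ∑ x, ∑ d, ∑ z, ∑ w, P y x d z w) - (∑ y, ∑ x, ∑ d, ∑ z, ∑ w, Q y x d z w) ≤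
      jointExpect P fun y x d z w => log (P y x d z w / Q y x d z w) := by
  simp only [jointExpect, ← sum_sub_distrib]
  gcongr with y _ x _ d _ z _ w _
  exact sub_le_mul_log_div (hP y x d z w) (hQ y x d z w) (hPQ y x d z w)


lemma markovJoint_nonneg (hP : ∀ y x d z w, 0 ≤ P y x d z w)
    (y : Yt) (x : Xt) (d : Dt) (z : Zt) (w : Wt) : 0 ≤ markovJoint P y x d z w :=
  div_nonneg (mul_nonneg (sum_nonneg fun _ _ => hP _ _ _ _ _) (sum_nonneg fun _ _ => hP _ _ _ _ _))
    (sum_nonneg fun _ _ => sum_nonneg fun _ _ => hP _ _ _ _ _)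

lemma sum_markovJoint_d (hP : ∀ y x d z w, 0 ≤ P y x d z w) (y : Yt) (x : Xt) (z : Zt) (w : Wt) :
    ∑ d, markovJoint P y x d z w = pYXZW P y x z w := by
  have hmarg : ∑ d, pXDZW P x d z w = pXZW P x z w := sum_comm
  have hle : pYXZW P y x z w ≤ pXZW P x z w :=
    single_le_sum (fun y _ => sum_nonneg fun d _ => hP y x d z w) (mem_univ y)
  simp only [markovJoint, ← sum_div, ← sum_mul, hmarg]
  rcases (hle.trans' (sum_nonneg fun d _ => hP y x d z w)).eq_or_lt with h0 | hpos
  · rw [← h0, div_zero]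
    exact le_antisymm (sum_nonneg fun d _ => hP y x d z w) (h0 ▸ hle)
  · exact mul_div_cancel_left₀ _ hpos.ne'

lemma sum_markovJoint (hP : ∀ y x d z w, 0 ≤ P y x d z w) :
    ∑ y, ∑ x, ∑ d, ∑ z, ∑ w, markovJoint P y x d z w =
      ∑ y, ∑ x, ∑ d, ∑ z, ∑ w, P y x d z w := by
  simp_rw [sum_comm (s := (univ : Finset Dt)), sum_markovJoint_d hP]
  rfl

lemma condEntropyYXD_le_condEntropyYXZW (hP : ∀ y x d z w, 0 ≤ P y x d z w)
    (hMarkov : ∀ y x d z w, P y x d z w * pXD P x d = pYXD P y x d * pXDZW P x d z w) :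
    condEntropyYXD P ≤ condEntropyYXZW P := by
  have hgibbs := sum_sub_sum_le_jointExpect_log_div hP (markovJoint_nonneg hP)
    fun y x d z w h => div_pos (mul_pos (pXDZW_pos hP h) (pYXZW_pos hP h)) (pXZW_pos hP h)
  rw [sum_markovJoint hP, sub_self] at hgibbs
  have hsplit : (jointExpect P fun y x d _ _ => log (pYXD P y x d / pXD P x d)) -
      (jointExpect P fun y x _ z w => log (pYXZW P y x z w / pXZW P x z w)) =
      jointExpect P fun y x d z w => log (P y x d z w / markovJoint P y x d z w) := by
    rw [← jointExpect_sub]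
    refine jointExpect_congr hP fun y x d z w h => ?_
    have hXDZW := pXDZW_pos hP h
    have hYXZW := pYXZW_pos hP h
    have hXZW := pXZW_pos hP h
    have hcond : pYXD P y x d / pXD P x d = P y x d z w / pXDZW P x d z w := by
      rw [div_eq_div_iff (pXD_pos hP h).ne' hXDZW.ne']
      linear_combination -hMarkov y x d z w
    rw [hcond, ← log_div (by positivity) (by positivity), markovJoint]
    congr 1
    field_simp
  rw [condEntropyYXD, condEntropyYXZW, sum_pYXD_mul, sum_pYXZW_mul]
  linarith

lemma IyDx_eq (hP : ∀ y x d z w, 0 ≤ P y x d z w) :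
    IyDx P = condEntropyYX P - condEntropyYXD P := by
  rw [IyDx, condEntropyYX, condEntropyYXD, sum_pYXD_mul, sum_pYX_mul, sum_pYXD_mul, neg_sub_neg,
    ← jointExpect_sub]
  refine jointExpect_congr hP fun y x d z w h => ?_
  have hYXD := pYXD_pos hP h
  have hXD := pXD_pos hP h
  have hYX := pYX_pos hP h
  have hX := pX_pos hP h
  rw [← log_div (by positivity) (by positivity)]
  congr 1
  field_simp

lemma klGlobal_eq_zero (hP : ∀ y x d z w, 0 ≤ P y x d z w)
    (hz : ∀ x d z, pXDZ P x d z * pD P d = pDZ P d z * pXD P x d) :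
    klGlobal P = 0 := by
  rw [klGlobal, sum_pXDZ_mul]
  calc _ = jointExpect P fun _ _ _ _ _ => 0 := jointExpect_congr hP fun y x d z w h => ?_
    _ = 0 := by simp [jointExpect]
  rw [div_div_div_eq, hz, mul_comm (pDZ P d z),
    div_self (mul_ne_zero (pXD_pos hP h).ne' (pDZ_pos hP h).ne'), log_one]

lemma klLocal_eq_IZxD (hP : ∀ y x d z w, 0 ≤ P y x d z w)
    (hfact₁ : ∀ x d z w, pXDZW P x d z w * pXD P x d = pXDZ P x d z * pXDW P x d w)
    (hfact₂ : ∀ d z w, pDZW P d z w * pD P d = pDZ P d z * pDW P d w)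
    (hz : ∀ x d z, pXDZ P x d z * pD P d = pDZ P d z * pXD P x d) :
    klLocal P = IZxD P := by
  rw [klLocal, IZxD, sum_pXDW_mul, sum_pXDZW_mul]
  refine jointExpect_congr hP fun y x d z w h => ?_
  have hXD := pXD_pos hP h
  have hDW := pDW_pos hP h
  have hDZW := pDZW_pos hP h
  rw [div_div_div_eq]
  congr 1
  rw [div_eq_div_iff (by positivity) (by positivity)]
  linear_combination pXDW P x d w * pXD P x d * hfact₂ d z w - pD P d * pDW P d w * hfact₁ x d z w
    - pXDW P x d w * pDW P d w * hz x d z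

end

theorem objective_le_info_bound
    (hP : ∀ y x d z w, 0 ≤ P y x d z w)
    -- Markov property: y ⊥ (z, w) | (x, D)  (Z is generated from D)
    (hMarkov : ∀ y x d z w,
      P y x d z w * pXD P x d = pYXD P y x d * pXDZW P x d z w)
    -- z and w are conditionally independent given (x, D)
    (hfact₁ : ∀ x d z w,
      pXDZW P x d z w * pXD P x d = pXDZ P x d z * pXDW P x d w)
    -- z and w are conditionally independent given D
    (hfact₂ : ∀ d z w,
      pDZW P d z w * pD P d = pDZ P d z * pDW P d w)
    -- z depends only on the context dataset D:  z ⊥ x | D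
    (hz : ∀ x d z, pXDZ P x d z * pD P d = pDZ P d z * pXD P x d) :
    objectiveL P + condEntropyYX P ≤ IyDx P - IZxD P := by
  rw [objectiveL_eq, IyDx_eq hP, ← klLocal_eq_IZxD hP hfact₁ hfact₂ hz, klGlobal_eq_zero hP hz]
  linarith [condEntropyYXD_le_condEntropyYXZW hP hMarkov]

end NPSA
end
end
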